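/- For every step size s > 0, any solution X of the critical high-resolution differential equation Ẍ(t) + ∇f(X(t) + √s Ẋ(t)) = 0 obeys lim_{t→∞} t · inf_{t₀ ≤ u ≤ t} ‖∇f(X(u) + √s Ẋ(u))‖² = 0 for every fixed t₀ > 0, and the objective value is bounded: f(X(t) + √s Ẋ(t)) − f(x⋆) ≤ f(X(t₀) + √s Ẋ(t₀)) − f(x⋆) + (1/2)‖Ẋ(t₀)‖² for all t ≥ t₀. -/

import Mathlib

open Set Filter Topology

/-!
The Lyapunov function `E t = f (X t + √s • Ẋ t) + ‖Ẋ t‖² / 2` satisfies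
`E' = -√s ‖∇f (X + √s • Ẋ)‖²` along the flow, so it is nonincreasing (the second claim) and,
being bounded below by `f x⋆`, converges. Writing `m t` for the infimum of the squared gradient
norm over `[t₀, t]`, integrating `E'` over `[t/2, t]` gives `√s · m t · t/2 ≤ E (t/2) - E t → 0`.
-/

lemma mul_sub_le_sub_of_hasDerivAt_le_neg {E E' : ℝ → ℝ} {a b k : ℝ} (hab : a ≤ b)
    (hE : ∀ u ∈ Icc a b, HasDerivAt E (E' u) u) (hE' : ∀ u ∈ Icc a b, E' u ≤ -k) :
    k * (b - a) ≤ E a - E b := by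
  have := (convex_Icc a b).image_sub_le_mul_sub_of_deriv_le (f := E) (C := -k)
    (fun u hu => (hE u hu).continuousAt.continuousWithinAt)
    (fun u hu => (hE u (interior_subset hu)).differentiableAt.differentiableWithinAt)
    (fun u hu => (hE u (interior_subset hu)).deriv ▸ hE' u (interior_subset hu))
    a (left_mem_Icc.2 hab) b (right_mem_Icc.2 hab) hab
  linarith

lemma antitoneOn_Ici_of_hasDerivAt_nonpos {E E' : ℝ → ℝ} {a : ℝ}
    (hE : ∀ u ∈ Ici a, HasDerivAt E (E' u) u) (hE' : ∀ u ∈ Ici a, E' u ≤ 0) :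
    AntitoneOn E (Ici a) := fun x hx y _ hxy => by
  have := mul_sub_le_sub_of_hasDerivAt_le_neg (k := 0) hxy
    (fun u hu => hE u (hx.trans hu.1)) (fun u hu => by simpa using hE' u (hx.trans hu.1))
  linarith

lemma AntitoneOn.exists_tendsto_atTop_of_bddBelow {ι α : Type*} [LinearOrder ι]
    [ConditionallyCompleteLinearOrder α] [TopologicalSpace α] [OrderTopology α]
    {E : ι → α} {a : ι} (hE : AntitoneOn E (Ici a)) (hbdd : BddBelow (E '' Ici a)) :
    ∃ l, Tendsto E atTop (𝓝 l) := by
  have hanti : Antitone fun t => E (max t a) := fun x y hxy =>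
    hE (le_max_right x a) (le_max_right y a) (max_le_max hxy le_rfl)
  have hrange : BddBelow (range fun t => E (max t a)) :=
    hbdd.mono (range_subset_iff.2 fun t => mem_image_of_mem E (le_max_right t a))
  refine ⟨_, (tendsto_atTop_ciInf hanti hrange).congr' ?_⟩
  filter_upwards [eventually_ge_atTop a] with t ht
  rw [max_eq_left ht]

theorem tendsto_mul_sInf_image_Icc_of_hasDerivAt {E g : ℝ → ℝ} {c t₀ : ℝ} (hc : 0 < c)
    (hE : ∀ u ∈ Ici t₀, HasDerivAt E (-(c * g u)) u) (hg : ∀ u ∈ Ici t₀, 0 ≤ g u)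
    (hbdd : BddBelow (E '' Ici t₀)) :
    Tendsto (fun t => t * sInf (g '' Icc t₀ t)) atTop (𝓝 0) := by
  have hanti : AntitoneOn E (Ici t₀) := antitoneOn_Ici_of_hasDerivAt_nonpos hE
    fun u hu => neg_nonpos.2 (mul_nonneg hc.le (hg u hu))
  obtain ⟨l, hl⟩ := hanti.exists_tendsto_atTop_of_bddBelow hbdd
  have hdrop : Tendsto (fun t => 2 / c * (E (t / 2) - E t)) atTop (𝓝 0) := by
    simpa using ((hl.comp (tendsto_id.atTop_div_const two_pos)).sub hl).const_mul (2 / c)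
  have hgbdd : ∀ t, BddBelow (g '' Icc t₀ t) := fun t =>
    ⟨0, by rintro _ ⟨u, hu, rfl⟩; exact hg u hu.1⟩
  refine squeeze_zero' ?_ ?_ hdrop
  · filter_upwards [eventually_ge_atTop 0] with t ht
    exact mul_nonneg ht (Real.sInf_nonneg (by rintro _ ⟨u, hu, rfl⟩; exact hg u hu.1))
  · filter_upwards [eventually_ge_atTop (2 * t₀), eventually_ge_atTop 0] with t ht ht0
    set m := sInf (g '' Icc t₀ t)
    have hhalf : t₀ ≤ t / 2 := by linarith
    have hdecay : c * m * (t - t / 2) ≤ E (t / 2) - E t :=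
      mul_sub_le_sub_of_hasDerivAt_le_neg (by linarith)
        (fun u hu => hE u (hhalf.trans hu.1)) fun u hu => by
          have : m ≤ g u := csInf_le (hgbdd t) (mem_image_of_mem g ⟨hhalf.trans hu.1, hu.2⟩)
          nlinarith
    calc t * m = 2 / c * (c * m * (t - t / 2)) := by field_simp; ring
      _ ≤ 2 / c * (E (t / 2) - E t) := by gcongr

theorem hasDerivAt_energy {F : Type*} [NormedAddCommGroup F] [InnerProductSpace ℝ F]
    [CompleteSpace F] {f : F → ℝ} {f' : F → F} {X V : ℝ → F} {c t : ℝ}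
    (hf : HasGradientAt f (f' (X t + c • V t)) (X t + c • V t))
    (hX : HasDerivAt X (V t) t) (hV : HasDerivAt V (-f' (X t + c • V t)) t) :
    HasDerivAt (fun t => f (X t + c • V t) + ‖V t‖ ^ 2 / 2)
      (-(c * ‖f' (X t + c • V t)‖ ^ 2)) t := by
  have hY := hX.add (hV.const_smul c)
  have hfY := hf.hasFDerivAt.comp_hasDerivAt t hY
  have hV2 := (hV.norm_sq).div_const 2
  refine (hfY.add hV2).congr_deriv ?_
  simp only [InnerProductSpace.toDual_apply_apply, smul_neg, inner_add_right, inner_neg_right,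
    real_inner_smul_right, real_inner_self_eq_norm_sq, real_inner_comm (V t)]
  ring

theorem critical_continuous_convergence
    (s : ℝ) (hs : 0 < s)
    {d : ℕ} (f : EuclideanSpace ℝ (Fin d) → ℝ)
    (f' : EuclideanSpace ℝ (Fin d) → EuclideanSpace ℝ (Fin d))
    (xstar : EuclideanSpace ℝ (Fin d))
    (X V : ℝ → EuclideanSpace ℝ (Fin d))
    (hgrad : ∀ z, HasGradientAt f (f' z) z)
    (hmin : ∀ z, f xstar ≤ f z)
    (hX : ∀ t ∈ Set.Ioi (0 : ℝ), HasDerivAt X (V t) t)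
    (hV : ∀ t ∈ Set.Ioi (0 : ℝ),
      HasDerivAt V (-(f' (X t + Real.sqrt s • V t))) t) :
    (∀ t₀ : ℝ, 0 < t₀ →
      Filter.Tendsto
        (fun t : ℝ => t *
          sInf ((fun u : ℝ => ‖f' (X u + Real.sqrt s • V u)‖ ^ 2) '' Set.Icc t₀ t))
        Filter.atTop (nhds 0)) ∧
    (∀ t₀ : ℝ, 0 < t₀ → ∀ t : ℝ, t₀ ≤ t →
      f (X t + Real.sqrt s • V t) - f xstar ≤
        f (X t₀ + Real.sqrt s • V t₀) - f xstar + (1 / 2) * ‖V t₀‖ ^ 2) := by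
  set E : ℝ → ℝ := fun t => f (X t + Real.sqrt s • V t) + ‖V t‖ ^ 2 / 2
  have hE : ∀ t₀ > 0, ∀ u ∈ Ici t₀,
      HasDerivAt E (-(Real.sqrt s * ‖f' (X u + Real.sqrt s • V u)‖ ^ 2)) u :=
    fun t₀ ht₀ u hu =>
      hasDerivAt_energy (hgrad _) (hX u (ht₀.trans_le hu)) (hV u (ht₀.trans_le hu))
  have hEbdd : ∀ t, f xstar ≤ E t := fun t => by
    have := hmin (X t + Real.sqrt s • V t)
    have := sq_nonneg ‖V t‖
    simp only [E]
    linarith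
  refine ⟨fun t₀ ht₀ => ?_, fun t₀ ht₀ t ht => ?_⟩
  · exact tendsto_mul_sInf_image_Icc_of_hasDerivAt (Real.sqrt_pos.2 hs) (hE t₀ ht₀)
      (fun u _ => by positivity) ⟨f xstar, by rintro _ ⟨u, -, rfl⟩; exact hEbdd u⟩
  · have hanti := antitoneOn_Ici_of_hasDerivAt_nonpos (hE t₀ ht₀) fun u _ =>
      neg_nonpos.2 (by positivity)
    have hdecr : E t ≤ E t₀ := hanti (mem_Ici.2 le_rfl) ht ht
    have := sq_nonneg ‖V t‖
    simp only [E] at hdecr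
    linarith
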